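/- arXiv:1102.1493 — 3 statements merged into one kernel-verified Lean document; each statement's English description precedes it below -/
import Mathlib

section
/- Let λ ∈ ℂ with λ ≠ 0 and λ ≠ 1, let k ∈ ℤ, and let n ≥ 1 be an integer. Then 2πik − log λ ≠ 0 and ∫_0^1 λ^x · 𝓑_n(x;λ) · e^{−2πikx} dx = −n!/(2πik − log λ)^n. -/
noncomputable def ABnum (lam : ℂ) : ℕ → ℂ
  | 0 => 0
  | n + 1 =>
    ((if n = 0 then 1 else 0) -
        lam * ∑ k ∈ (Finset.range (n + 1)).attach,
          (((n + 1).choose k.1 : ℕ) : ℂ) * ABnum lam k.1) / (lam - 1)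
decreasing_by exact Finset.mem_range.mp k.2

/-- The Apostol–Bernoulli polynomial `𝓑_n(x;λ)`. -/
noncomputable def ABpoly (lam : ℂ) (n : ℕ) (x : ℂ) : ℂ :=
  ∑ k ∈ Finset.range (n + 1), ((n.choose k : ℕ) : ℂ) * ABnum lam k * x ^ (n - k)

/-!
Put `μ = 2πik − log λ`, so that `λ^x e^{−2πikx} = e^{−μx}` and `e^{−μ} = λ ≠ 1`,
whence `μ ≠ 0`. Integrating `I_n = ∫₀¹ e^{−μx} 𝓑_n(x;λ) dx` by parts, using
`𝓑_n' = n 𝓑_{n−1}` and the boundary relation `λ 𝓑_n(1;λ) − 𝓑_n(0;λ) = δ_{n,1}`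
(a rewriting of the recursion for `𝓑_n(λ)`), gives `I_n = −δ_{n,1}/μ + (n/μ) I_{n−1}`
with `I_0 = 0`, hence `I_n = −n!/μ^n`.
-/

open Complex MeasureTheory

theorem integral_exp_neg_mul_mul_eq {μ : ℂ} (hμ : μ ≠ 0) {a b : ℝ} {f f' : ℝ → ℂ}
    (hf : ∀ x ∈ Set.uIcc a b, HasDerivAt f (f' x) x) (hf' : IntervalIntegrable f' volume a b) :
    ∫ x in a..b, exp (-μ * x) * f x =
      (exp (-μ * a) * f a - exp (-μ * b) * f b) / μ +
        (∫ x in a..b, exp (-μ * x) * f' x) / μ := by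
  have hexp (x : ℝ) : HasDerivAt (fun t : ℝ => exp (-μ * t) / -μ) (exp (-μ * x)) x := by
    have h := ((hasDerivAt_id (x : ℂ)).const_mul (-μ)).cexp.div_const (-μ)
    simp only [id, mul_one, mul_div_cancel_right₀ _ (neg_ne_zero.mpr hμ)] at h
    exact h.comp_ofReal
  have hexp_int : IntervalIntegrable (fun x : ℝ => exp (-μ * x)) volume a b :=
    (by fun_prop : Continuous fun x : ℝ => exp (-μ * x)).intervalIntegrable a b
  have hparts :=
    intervalIntegral.integral_mul_deriv_eq_deriv_mul hf (fun x _ => hexp x) hf' hexp_int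
  simp only [mul_div_assoc', intervalIntegral.integral_div] at hparts
  simp only [mul_comm (exp _) (f _), mul_comm (exp _) (f' _), hparts]
  field_simp
  ring

theorem ABnum_succ (lam : ℂ) (hlam1 : lam ≠ 1) (m : ℕ) :
    (lam - 1) * ABnum lam (m + 1) =
      (if m = 0 then 1 else 0) -
        lam * ∑ k ∈ Finset.range (m + 1), ((m + 1).choose k : ℂ) * ABnum lam k := by
  rw [ABnum,
    Finset.sum_attach (Finset.range (m + 1)) fun k => ((m + 1).choose k : ℂ) * ABnum lam k]
  field_simp [sub_ne_zero.mpr hlam1]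

theorem ABpoly_zero (lam : ℂ) : ABpoly lam 0 = 0 := by
  ext x
  simp [ABpoly, ABnum]

theorem ABpoly_at_zero (lam : ℂ) (n : ℕ) : ABpoly lam n 0 = ABnum lam n := by
  rw [ABpoly, Finset.sum_eq_single_of_mem n (Finset.self_mem_range_succ n)]
  · simp
  · intro k hk hkn
    have : n - k ≠ 0 := by have := Finset.mem_range_succ_iff.mp hk; omega
    simp [zero_pow this]

theorem mul_ABpoly_one_sub_ABpoly_zero (lam : ℂ) (hlam1 : lam ≠ 1) (n : ℕ) :
    lam * ABpoly lam n 1 - ABpoly lam n 0 = if n = 1 then 1 else 0 := by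
  cases n with
  | zero => simp [ABpoly_zero]
  | succ m =>
    rw [ABpoly_at_zero, ABpoly, Finset.sum_range_succ]
    simp only [one_pow, mul_one, Nat.choose_self, Nat.cast_one, one_mul, add_eq_right]
    linear_combination ABnum_succ lam hlam1 m

theorem hasDerivAt_ABpoly (lam : ℂ) (m : ℕ) (x : ℂ) :
    HasDerivAt (ABpoly lam (m + 1)) ((m + 1) * ABpoly lam m x) x := by
  have h := HasDerivAt.fun_sum (u := Finset.range (m + 1 + 1)) fun k _ =>
    (hasDerivAt_pow (m + 1 - k) x).const_mul (((m + 1).choose k : ℂ) * ABnum lam k)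
  refine h.congr_deriv ?_
  rw [Finset.sum_range_succ, ABpoly, Finset.mul_sum]
  simp only [Nat.sub_self, Nat.cast_zero, zero_mul, mul_zero, add_zero]
  refine Finset.sum_congr rfl fun k hk => ?_
  have hc : (m.choose k : ℂ) * (m + 1) = (m + 1).choose k * (m + 1 - k : ℕ) := by
    exact_mod_cast Nat.choose_mul_succ_eq m k
  rw [show m + 1 - k - 1 = m - k by omega]
  linear_combination (-(ABnum lam k * x ^ (m - k))) * hc

theorem continuous_ABpoly_ofReal (lam : ℂ) (n : ℕ) :
    Continuous fun x : ℝ => ABpoly lam n x := by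
  unfold ABpoly
  fun_prop

theorem integral_exp_neg_mul_ABpoly_succ_eq (lam : ℂ) (hlam1 : lam ≠ 1) {μ : ℂ}
    (hμ : μ ≠ 0) (hexp : exp (-μ) = lam) (m : ℕ) :
    ∫ x : ℝ in 0..1, exp (-μ * x) * ABpoly lam (m + 1) x =
      -(if m = 0 then 1 else 0) / μ +
        (m + 1) / μ * ∫ x : ℝ in 0..1, exp (-μ * x) * ABpoly lam m x := by
  have hboundary := mul_ABpoly_one_sub_ABpoly_zero lam hlam1 (m + 1)
  rw [integral_exp_neg_mul_mul_eq hμ (fun x _ => (hasDerivAt_ABpoly lam m x).comp_ofReal)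
    ((continuous_const.mul (continuous_ABpoly_ofReal lam m)).intervalIntegrable 0 1)]
  simp only [mul_left_comm (exp _) ((m : ℂ) + 1), intervalIntegral.integral_const_mul,
    ofReal_zero, ofReal_one, mul_zero, mul_one, exp_zero, hexp]
  simp only [Nat.add_eq_right] at hboundary
  field_simp
  linear_combination -hboundary

theorem integral_exp_neg_mul_ABpoly_succ (lam : ℂ) (hlam1 : lam ≠ 1) {μ : ℂ} (hμ : μ ≠ 0)
    (hexp : exp (-μ) = lam) (n : ℕ) :
    ∫ x : ℝ in 0..1, exp (-μ * x) * ABpoly lam (n + 1) x =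
      -((n + 1).factorial : ℂ) / μ ^ (n + 1) := by
  induction n with
  | zero =>
    rw [integral_exp_neg_mul_ABpoly_succ_eq lam hlam1 hμ hexp, ABpoly_zero]
    simp
  | succ n ih =>
    rw [integral_exp_neg_mul_ABpoly_succ_eq lam hlam1 hμ hexp, ih, if_neg n.succ_ne_zero,
      Nat.factorial_succ (n + 1)]
    push_cast
    field_simp
    ring

theorem exp_neg_two_pi_I_int_mul_sub_log {lam : ℂ} (hlam0 : lam ≠ 0) (k : ℤ) :
    exp (-(2 * Real.pi * I * k - log lam)) = lam := by
  rw [show -(2 * Real.pi * I * k - log lam) = log lam + (-k : ℤ) * (2 * Real.pi * I) by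
      push_cast; ring,
    exp_add, exp_log hlam0, exp_int_mul_two_pi_mul_I, mul_one]

theorem apostol_bernoulli_fourier_coeff (lam : ℂ) (hlam0 : lam ≠ 0) (hlam1 : lam ≠ 1)
    (k : ℤ) (n : ℕ) (hn : 1 ≤ n) :
    2 * Real.pi * Complex.I * k - Complex.log lam ≠ 0 ∧
    ∫ x : ℝ in (0:ℝ)..1,
        Complex.exp (x * Complex.log lam) * ABpoly lam n x *
          Complex.exp (-(2 * Real.pi * Complex.I * k * x))
      = -(n.factorial : ℂ) / (2 * Real.pi * Complex.I * k - Complex.log lam) ^ n := by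
  set μ := 2 * Real.pi * Complex.I * k - Complex.log lam with hμ_def
  have hexp : exp (-μ) = lam := exp_neg_two_pi_I_int_mul_sub_log hlam0 k
  have hμ : μ ≠ 0 := by
    rintro hμ_zero
    rw [hμ_zero, neg_zero, exp_zero] at hexp
    exact hlam1 hexp.symm
  have hkernel (x : ℝ) : exp (x * log lam) * ABpoly lam n x * exp (-(2 * Real.pi * I * k * x)) =
      exp (-μ * x) * ABpoly lam n x := by
    rw [mul_right_comm, ← exp_add, hμ_def]
    ring_nf
  obtain ⟨m, rfl⟩ := Nat.exists_eq_add_of_le' hn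
  refine ⟨hμ, ?_⟩
  simp only [hkernel, integral_exp_neg_mul_ABpoly_succ lam hlam1 hμ hexp]
end

section
/- Let m ≥ 1 be an integer and let K ⊆ ℂ be compact. Then there exists a constant C > 0 such that for all integers n ≥ 2 and all z ∈ K, |(2πi)^n · B_n(z)/n! + ∑_{1≤|k|≤m} e^{2πikz}/k^n| ≤ C·e^{2π(m+1)|z|}/(m+1)^n, where the sum is over integers k with 1 ≤ |k| ≤ m. -/
/-!
The generating function `t e^{zt} / (e^t - 1) = ∑ Bₙ(z) tⁿ / n!` is meromorphic in `t`, with simple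
poles at the nonzero periods `2πik` of `exp` and principal parts `2πik e^{2πikz} / (t - 2πik)`.
Removing the principal parts for `0 < |k| ≤ m + 1` leaves a function holomorphic on
`|t| < 2π(m + 2)`; since `-2πik / (t - 2πik) = ∑ (t / 2πik)ⁿ`, its Taylor coefficients are
`Bₙ(z) / n! + ∑ e^{2πikz} (2πik)⁻ⁿ`. On the circle `|t| = π(2m + 3)` it is bounded uniformly for
`z ∈ K` by compactness, so Cauchy's estimate bounds these coefficients by `C (π(2m + 3))⁻ⁿ`. After
multiplying by `(2πi)ⁿ` this is at most `C (m + 1)⁻ⁿ`, and the two terms `k = ±(m + 1)` contribute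
at most `2 e^{2π(m+1)|z|} (m + 1)⁻ⁿ`.
-/

open Complex Finset Filter Metric
open scoped Nat Real NNReal ENNReal Topology

theorem eq_iteratedDeriv_div_factorial_of_hasSum {f : ℂ → ℂ} {c : ℕ → ℂ} {r : ℝ}
    (hr : 0 < r) (hf : AnalyticAt ℂ f 0)
    (hc : ∀ t : ℂ, t ≠ 0 → ‖t‖ < r → HasSum (fun n ↦ c n * t ^ n) (f t)) :
    c = fun n ↦ iteratedDeriv n f 0 / n ! := by
  obtain ⟨ρ, hρ0, hρr⟩ := exists_between hr
  lift ρ to ℝ≥0 using hρ0.le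
  set p := FormalMultilinearSeries.ofScalars ℂ c
  have hp (t : ℂ) (n : ℕ) : p n (fun _ ↦ t) = c n * t ^ n := by
    rw [FormalMultilinearSeries.ofScalars_apply_eq, smul_eq_mul]
  have hρ_radius : (ρ : ℝ≥0∞) ≤ p.radius := by
    refine p.le_radius_of_tendsto (l := 0) ?_
    have hρ := hc ρ (mod_cast hρ0.ne') (by simpa [abs_of_pos hρ0] using hρr)
    simpa [p, FormalMultilinearSeries.ofScalars_norm] using hρ.summable.norm.tendsto_atTop_zero
  have hρ0' : (0 : ℝ≥0∞) < ρ := mod_cast hρ0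
  have hsum : HasFPowerSeriesOnBall p.sum p 0 ρ :=
    (p.hasFPowerSeriesOnBall (hρ0'.trans_le hρ_radius)).mono hρ0' hρ_radius
  have heq : f =ᶠ[𝓝 0] p.sum := by
    refine (hf.frequently_eq_iff_eventually_eq hsum.analyticAt).mp (Eventually.frequently ?_)
    filter_upwards [nhdsWithin_le_nhds (ball_mem_nhds (0 : ℂ) hρ0), self_mem_nhdsWithin]
      with t ht ht0
    rw [mem_ball_zero_iff] at ht
    have h := hsum.hasSum (y := t) (by simpa using ht)
    simp only [zero_add, hp] at h
    exact (hc t ht0 (ht.trans hρr)).unique h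
  exact FormalMultilinearSeries.ofScalars_series_injective ℂ ℂ
    ((hsum.hasFPowerSeriesAt.congr heq.symm).eq_formalMultilinearSeries hf.hasFPowerSeriesAt)

theorem norm_coeff_le_of_hasSum {f : ℂ → ℂ} {c : ℕ → ℂ} {r R C : ℝ} (hr : 0 < r)
    (hR : 0 < R) (hf : DifferentiableOn ℂ f (closedBall 0 R))
    (hc : ∀ t : ℂ, t ≠ 0 → ‖t‖ < r → HasSum (fun n ↦ c n * t ^ n) (f t))
    (hC : ∀ t ∈ sphere (0 : ℂ) R, ‖f t‖ ≤ C) (n : ℕ) :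
    ‖c n‖ ≤ C / R ^ n := by
  have hcn := congrFun (eq_iteratedDeriv_div_factorial_of_hasSum hr
    (hf.analyticAt (closedBall_mem_nhds 0 hR)) hc) n
  have hcauchy := norm_iteratedDeriv_le_of_forall_mem_sphere_norm_le n hR
    (hf.diffContOnCl_ball subset_rfl) hC
  rw [hcn, norm_div, norm_natCast, div_le_iff₀ (by positivity)]
  calc ‖iteratedDeriv n f 0‖ ≤ n ! * C / R ^ n := hcauchy
    _ = C / R ^ n * n ! := by ring

noncomputable def bernoulliCoeff (z : ℂ) (n : ℕ) : ℂ :=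
  Polynomial.aeval z (Polynomial.bernoulli n) / n !

theorem sum_bernoulliCoeff_div_factorial (z : ℂ) (n : ℕ) :
    ∑ k ∈ range (n + 1), bernoulliCoeff z k / (n + 1 - k)! = z ^ n / n ! := by
  have h := congrArg (fun p ↦ Polynomial.aeval z p / ((n + 1)! : ℂ))
    (Polynomial.sum_bernoulli n)
  simp only [map_sum, Polynomial.aeval_monomial, sum_div] at h
  have hfact (j : ℕ) : (j ! : ℂ) ≠ 0 := by exact_mod_cast j.factorial_ne_zero
  convert h using 1
  · refine sum_congr rfl fun k hk ↦ ?_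
    rw [bernoulliCoeff, map_smul, Rat.smul_def, Rat.cast_natCast,
      Nat.cast_choose ℂ (by have := mem_range.1 hk; omega)]
    field_simp
    rw [mul_div_mul_right _ _ (hfact _)]
  · rw [Nat.factorial_succ]
    push_cast
    field_simp

theorem norm_bernoulliCoeff_le (z : ℂ) (n : ℕ) :
    ‖bernoulliCoeff z n‖ ≤ 2 ^ n * Real.exp ‖z‖ := by
  induction n using Nat.strong_induction_on with
  | _ n ih =>
  have hrec : bernoulliCoeff z n =
      z ^ n / (n ! : ℂ) - ∑ k ∈ range n, bernoulliCoeff z k / ((n + 1 - k)! : ℂ) := by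
    rw [← sum_bernoulliCoeff_div_factorial, sum_range_succ]
    simp
  have hterm : ∀ k ∈ range n,
      ‖bernoulliCoeff z k / ((n + 1 - k)! : ℂ)‖ ≤ 2 ^ k * Real.exp ‖z‖ := by
    intro k hk
    rw [norm_div, Complex.norm_natCast]
    exact (div_le_self (norm_nonneg _) (mod_cast (n + 1 - k).factorial_pos)).trans
      (ih k (mem_range.1 hk))
  calc ‖bernoulliCoeff z n‖
      ≤ ‖z ^ n / (n ! : ℂ)‖ +
          ∑ k ∈ range n, ‖bernoulliCoeff z k / ((n + 1 - k)! : ℂ)‖ := by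
        rw [hrec]
        refine (norm_sub_le _ _).trans ?_
        gcongr
        exact norm_sum_le _ _
    _ ≤ Real.exp ‖z‖ + ∑ k ∈ range n, 2 ^ k * Real.exp ‖z‖ := by
        gcongr with k hk
        · rw [norm_div, norm_pow, Complex.norm_natCast]
          exact Real.pow_div_factorial_le_exp _ (norm_nonneg z) n
        · exact hterm k hk
    _ = 2 ^ n * Real.exp ‖z‖ := by
        rw [← sum_mul]
        have := geom_sum_mul_add 1 n (R := ℝ)
        norm_num at this
        linear_combination Real.exp ‖z‖ * this

theorem hasSum_pow_div_factorial (t : ℂ) : HasSum (fun n ↦ t ^ n / n !) (exp t) := by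
  rw [exp_eq_exp_ℂ]
  exact NormedSpace.expSeries_div_hasSum_exp t

theorem summable_norm_bernoulliCoeff_mul_pow (z : ℂ) {t : ℂ} (ht : ‖t‖ < 1 / 2) :
    Summable fun n ↦ ‖bernoulliCoeff z n * t ^ n‖ := by
  refine .of_nonneg_of_le (fun n ↦ norm_nonneg _) (fun n ↦ ?_)
    ((summable_geometric_of_lt_one (by positivity) (by linarith : 2 * ‖t‖ < 1)).mul_left
      (Real.exp ‖z‖))
  rw [norm_mul, norm_pow, mul_pow, mul_left_comm, ← mul_assoc]
  exact mul_le_mul_of_nonneg_right (norm_bernoulliCoeff_le z n) (by positivity)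

theorem summable_norm_pow_div_factorial_succ (t : ℂ) :
    Summable fun n : ℕ ↦ ‖t ^ n / (n + 1)!‖ := by
  refine .of_nonneg_of_le (fun n ↦ norm_nonneg _) (fun n ↦ ?_)
    (Real.summable_pow_div_factorial ‖t‖)
  rw [norm_div, norm_pow, Complex.norm_natCast]
  gcongr
  omega

theorem exp_sub_one_eq_mul_tsum (t : ℂ) : exp t - 1 = t * ∑' n : ℕ, t ^ n / (n + 1)! := by
  have hsum := summable_norm_pow_div_factorial_succ t
  have h := (hasSum_nat_add_iff' 1).mpr (hasSum_pow_div_factorial t)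
  simp only [range_one, sum_singleton, pow_zero, Nat.factorial_zero, Nat.cast_one, div_one] at h
  have hshift : (fun n : ℕ ↦ t ^ (n + 1) / (n + 1)!) = fun n ↦ t * (t ^ n / (n + 1)!) := by
    funext n
    ring
  rw [hshift] at h
  exact h.unique (hsum.of_norm.hasSum.mul_left t)

theorem tsum_bernoulliCoeff_mul_exp_sub_one (z : ℂ) {t : ℂ} (ht : ‖t‖ < 1 / 2) :
    (∑' n, bernoulliCoeff z n * t ^ n) * (exp t - 1) = t * exp (z * t) := by
  rw [exp_sub_one_eq_mul_tsum, mul_left_comm, tsum_mul_tsum_eq_tsum_sum_range_of_summable_norm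
    (summable_norm_bernoulliCoeff_mul_pow z ht) (summable_norm_pow_div_factorial_succ t),
    ← (hasSum_pow_div_factorial (z * t)).tsum_eq]
  congr 1
  refine tsum_congr fun n ↦ ?_
  calc ∑ k ∈ range (n + 1), bernoulliCoeff z k * t ^ k * (t ^ (n - k) / (n - k + 1)!)
      = t ^ n * ∑ k ∈ range (n + 1), bernoulliCoeff z k / (n + 1 - k)! := by
        rw [mul_sum]
        refine sum_congr rfl fun k hk ↦ ?_
        have hkn : k ≤ n := Nat.lt_succ_iff.mp (mem_range.mp hk)
        rw [← pow_mul_pow_sub t hkn, show n - k + 1 = n + 1 - k by omega]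
        ring
    _ = (z * t) ^ n / n ! := by
        rw [sum_bernoulliCoeff_div_factorial, mul_pow]
        ring

noncomputable def expPeriod (k : ℤ) : ℂ := 2 * π * I * k

theorem expPeriod_injective : Function.Injective expPeriod := fun j k h ↦ by
  have h2πI : (2 * π * I : ℂ) ≠ 0 := by simp [Real.pi_ne_zero, I_ne_zero]
  exact_mod_cast mul_left_cancel₀ h2πI h

theorem expPeriod_ne_zero {k : ℤ} (hk : k ≠ 0) : expPeriod k ≠ 0 := by
  simp [expPeriod, hk, Real.pi_ne_zero, I_ne_zero]

theorem norm_expPeriod (k : ℤ) : ‖expPeriod k‖ = 2 * π * |(k : ℝ)| := by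
  simp [expPeriod, abs_of_pos Real.pi_pos]

theorem exp_expPeriod (k : ℤ) : exp (expPeriod k) = 1 :=
  exp_eq_one_iff.2 ⟨k, by rw [expPeriod]; ring⟩

theorem exp_eq_one_iff_exists_expPeriod {t : ℂ} : exp t = 1 ↔ ∃ k : ℤ, t = expPeriod k := by
  simp only [exp_eq_one_iff, expPeriod, mul_comm _ (_ : ℂ)]

theorem two_pi_le_norm_of_exp_eq_one {t : ℂ} (h : exp t = 1) (ht : t ≠ 0) :
    2 * π ≤ ‖t‖ := by
  obtain ⟨k, rfl⟩ := exp_eq_one_iff_exists_expPeriod.1 h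
  have hk : k ≠ 0 := by rintro rfl; simp [expPeriod] at ht
  rw [norm_expPeriod]
  have : (1 : ℝ) ≤ |(k : ℝ)| := by exact_mod_cast Int.one_le_abs hk
  nlinarith [Real.pi_pos]

theorem exp_ne_one_of_norm_sub_lt {s t : ℂ} (hs : exp s = 1) (hts : t ≠ s)
    (h : ‖t - s‖ < 2 * π) : exp t ≠ 1 := fun ht ↦
  (two_pi_le_norm_of_exp_eq_one (by rw [exp_sub, ht, hs, div_one]) (sub_ne_zero.2 hts)).not_gt h

theorem differentiable_dslope {f : ℂ → ℂ} (hf : Differentiable ℂ f) (s : ℂ) :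
    Differentiable ℂ (dslope f s) := by
  rw [← differentiableOn_univ] at hf ⊢
  exact (differentiableOn_dslope univ_mem).2 hf

theorem dslope_exp_of_exp_eq_one {s t : ℂ} (hs : exp s = 1) (hts : t ≠ s) :
    dslope exp s t = (exp t - 1) / (t - s) := by
  rw [dslope_of_ne _ hts, slope_def_field, hs]

/-- At a zero `t₀` of `exp t - 1` where `N` vanishes, `N t / (exp t - 1)` tends to
`N'(t₀) / exp t₀ = N'(t₀)`, so the `deriv` branch fills in a removable singularity. -/
noncomputable def divExpSubOne (N : ℂ → ℂ) (t : ℂ) : ℂ :=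
  if exp t = 1 then deriv N t else N t / (exp t - 1)

theorem differentiableAt_divExpSubOne {N : ℂ → ℂ} {t₀ : ℂ} (hN : Differentiable ℂ N)
    (h₀ : exp t₀ = 1 → N t₀ = 0) : DifferentiableAt ℂ (divExpSubOne N) t₀ := by
  by_cases he : exp t₀ = 1
  · have hden : dslope exp t₀ t₀ ≠ 0 := by simp [dslope_same, he]
    refine ((differentiable_dslope hN t₀ t₀).div
      (differentiable_dslope differentiable_exp t₀ t₀) hden).congr_of_eventuallyEq ?_
    filter_upwards [ball_mem_nhds t₀ Real.two_pi_pos] with t ht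
    rcases eq_or_ne t t₀ with rfl | htt
    · simp [divExpSubOne, he, dslope_same]
    · have het : exp t ≠ 1 :=
        exp_ne_one_of_norm_sub_lt he htt (by rwa [mem_ball, dist_eq_norm] at ht)
      rw [Pi.div_apply, divExpSubOne, if_neg het, dslope_exp_of_exp_eq_one he htt,
        dslope_of_ne _ htt, slope_def_field, h₀ he, sub_zero,
        div_div_div_cancel_right₀ (sub_ne_zero.2 htt)]
  · refine ((hN t₀).div (differentiableAt_exp.sub_const 1)
      (sub_ne_zero.2 he)).congr_of_eventuallyEq ?_
    filter_upwards [continuous_exp.continuousAt.eventually_ne he] with t ht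
    rw [divExpSubOne, if_neg ht, Pi.div_apply]

noncomputable def nonzeroIcc (M : ℕ) : Finset ℤ := (Icc (-(M : ℤ)) M).erase 0

section Regularized

variable (M : ℕ) (z : ℂ)

/-- Away from `2πik`, `dslope exp (2πik) t = (exp t - 1) / (t - 2πik)`, so after division by
`exp t - 1` the `k`-th summand becomes the principal part of `t e^{zt} / (exp t - 1)` at `2πik`. -/
noncomputable def regularizedNumerator (t : ℂ) : ℂ :=
  t * exp (z * t) -
    ∑ k ∈ nonzeroIcc M, expPeriod k * exp (expPeriod k * z) * dslope exp (expPeriod k) t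

noncomputable def regularizedGenFun : ℂ → ℂ := divExpSubOne (regularizedNumerator M z)

noncomputable def regularizedCoeff (n : ℕ) : ℂ :=
  bernoulliCoeff z n + ∑ k ∈ nonzeroIcc M, exp (expPeriod k * z) * (expPeriod k)⁻¹ ^ n

theorem differentiable_regularizedNumerator : Differentiable ℂ (regularizedNumerator M z) := by
  unfold regularizedNumerator
  have := fun k : ℤ ↦ differentiable_dslope differentiable_exp (expPeriod k)
  fun_prop

theorem regularizedNumerator_eq_zero {t : ℂ} (ht : exp t = 1) (htM : ‖t‖ < 2 * π * (M + 1)) :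
    regularizedNumerator M z t = 0 := by
  obtain ⟨k, rfl⟩ := exp_eq_one_iff_exists_expPeriod.1 ht
  have hterm : ∀ j ≠ k, dslope exp (expPeriod j) (expPeriod k) = 0 := fun j hjk ↦ by
    rw [dslope_exp_of_exp_eq_one (exp_expPeriod j) (expPeriod_injective.ne hjk.symm),
      exp_expPeriod, sub_self, zero_div]
  rw [regularizedNumerator]
  by_cases hk : k ∈ nonzeroIcc M
  · rw [sum_eq_single_of_mem k hk fun j _ hjk ↦ by rw [hterm j hjk, mul_zero], dslope_same,
      Complex.deriv_exp, exp_expPeriod, mul_one, mul_comm z, sub_self]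
  · have hk0 : k = 0 := by
      rw [norm_expPeriod] at htM
      have : |(k : ℝ)| < M + 1 := lt_of_mul_lt_mul_left htM (by positivity)
      rw [← Int.cast_abs] at this
      have : |k| < M + 1 := by exact_mod_cast this
      simp only [nonzeroIcc, mem_erase, mem_Icc, not_and] at hk
      have := abs_lt.1 this
      omega
    subst hk0
    rw [sum_eq_zero fun j hj ↦ by rw [hterm j (ne_of_mem_erase hj), mul_zero]]
    simp [expPeriod]

theorem differentiableOn_regularizedGenFun :
    DifferentiableOn ℂ (regularizedGenFun M z) (ball 0 (2 * π * (M + 1))) := fun _ ht ↦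
  (differentiableAt_divExpSubOne (differentiable_regularizedNumerator M z)
    fun he ↦ regularizedNumerator_eq_zero M z he (mem_ball_zero_iff.1 ht)).differentiableWithinAt

theorem hasSum_regularizedCoeff {t : ℂ} (ht0 : t ≠ 0) (ht : ‖t‖ < 1 / 2) :
    HasSum (fun n ↦ regularizedCoeff M z n * t ^ n) (regularizedGenFun M z t) := by
  have hlt : ‖t‖ < 2 * π := by linarith [Real.pi_gt_three]
  have hexp : exp t ≠ 1 := fun h ↦ (two_pi_le_norm_of_exp_eq_one h ht0).not_gt hlt
  have hperiod {k : ℤ} (hk : k ∈ nonzeroIcc M) : ‖t‖ < ‖expPeriod k‖ :=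
    hlt.trans_le (two_pi_le_norm_of_exp_eq_one (exp_expPeriod k)
      (expPeriod_ne_zero (ne_of_mem_erase hk)))
  have hgeom : ∀ k ∈ nonzeroIcc M,
      HasSum (fun n ↦ exp (expPeriod k * z) * (expPeriod k)⁻¹ ^ n * t ^ n)
        (exp (expPeriod k * z) * (1 - t / expPeriod k)⁻¹) := fun k hk ↦ by
    have hq : ‖t / expPeriod k‖ < 1 := by
      rw [norm_div, div_lt_one ((norm_nonneg t).trans_lt (hperiod hk))]
      exact hperiod hk
    have hterm : (fun n ↦ exp (expPeriod k * z) * (expPeriod k)⁻¹ ^ n * t ^ n) =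
        fun n ↦ exp (expPeriod k * z) * (t / expPeriod k) ^ n := funext fun n ↦ by
      rw [div_eq_mul_inv, mul_pow]
      ring
    rw [hterm]
    exact (hasSum_geometric_of_norm_lt_one hq).mul_left _
  have hsum := (summable_norm_bernoulliCoeff_mul_pow z ht).of_norm.hasSum.add (hasSum_sum hgeom)
  simp only [← sum_mul, ← add_mul] at hsum
  suffices hval : regularizedNumerator M z t / (exp t - 1) =
      ∑' n, bernoulliCoeff z n * t ^ n +
        ∑ k ∈ nonzeroIcc M, exp (expPeriod k * z) * (1 - t / expPeriod k)⁻¹ by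
    rw [regularizedGenFun, divExpSubOne, if_neg hexp, hval]
    exact hsum
  rw [div_eq_iff (sub_ne_zero.2 hexp), add_mul,
    tsum_bernoulliCoeff_mul_exp_sub_one z ht, regularizedNumerator, sum_mul, sub_eq_add_neg,
    ← sum_neg_distrib]
  congr 1
  refine sum_congr rfl fun k hk ↦ ?_
  have hk0 : expPeriod k ≠ 0 := norm_pos_iff.1 ((norm_nonneg t).trans_lt (hperiod hk))
  have htk : t ≠ expPeriod k := fun h ↦ (hperiod hk).ne (by rw [h])
  have htk' : t - expPeriod k ≠ 0 := sub_ne_zero.2 htk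
  rw [dslope_exp_of_exp_eq_one (exp_expPeriod k) htk]
  field_simp
  ring

theorem exp_ne_one_of_norm_eq {t : ℂ} (ht : ‖t‖ = π * (2 * M + 1)) : exp t ≠ 1 := by
  intro h
  obtain ⟨k, rfl⟩ := exp_eq_one_iff_exists_expPeriod.1 h
  rw [norm_expPeriod, ← Int.cast_abs] at ht
  have h2 : (2 * |k| : ℝ) = 2 * M + 1 :=
    mul_left_cancel₀ Real.pi_ne_zero (by linear_combination ht)
  have : 2 * |k| = 2 * (M : ℤ) + 1 := by exact_mod_cast h2
  omega

end Regularized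

theorem exists_bound_regularizedGenFun (M : ℕ) {K : Set ℂ} (hK : IsCompact K) :
    ∃ C > 0, ∀ z ∈ K, ∀ t ∈ sphere (0 : ℂ) (π * (2 * M + 1)),
      ‖regularizedGenFun M z t‖ ≤ C := by
  have hcont : ContinuousOn (fun p : ℂ × ℂ ↦ regularizedNumerator M p.1 p.2 / (exp p.2 - 1))
      (K ×ˢ sphere 0 (π * (2 * M + 1))) := by
    refine ContinuousOn.div (Continuous.continuousOn ?_) (by fun_prop) fun p hp ↦
      sub_ne_zero.2 (exp_ne_one_of_norm_eq M (mem_sphere_zero_iff_norm.1 hp.2))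
    have := fun k : ℤ ↦ (differentiable_dslope differentiable_exp (expPeriod k)).continuous
    unfold regularizedNumerator
    fun_prop
  obtain ⟨C, hC⟩ := (hK.prod (isCompact_sphere 0 _)).exists_bound_of_continuousOn hcont
  refine ⟨max C 1, by positivity, fun z hz t ht ↦ ?_⟩
  rw [regularizedGenFun, divExpSubOne,
    if_neg (exp_ne_one_of_norm_eq M (mem_sphere_zero_iff_norm.1 ht))]
  exact (hC (z, t) ⟨hz, ht⟩).trans (le_max_left _ _)

theorem exists_norm_regularizedCoeff_le (M : ℕ) {K : Set ℂ} (hK : IsCompact K) :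
    ∃ C > 0, ∀ z ∈ K, ∀ n, ‖regularizedCoeff M z n‖ ≤ C / (π * (2 * M + 1)) ^ n := by
  obtain ⟨C, hC0, hC⟩ := exists_bound_regularizedGenFun M hK
  refine ⟨C, hC0, fun z hz n ↦ norm_coeff_le_of_hasSum (by norm_num) (by positivity) ?_
    (fun t ht0 ht ↦ hasSum_regularizedCoeff M z ht0 ht) (hC z hz) n⟩
  refine (differentiableOn_regularizedGenFun M z).mono (closedBall_subset_ball ?_)
  nlinarith [Real.pi_pos]

theorem sum_nonzeroIcc_succ {α : Type*} [AddCommMonoid α] (M : ℕ) (f : ℤ → α) :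
    ∑ k ∈ nonzeroIcc (M + 1), f k = ∑ k ∈ nonzeroIcc M, f k + f (M + 1) + f (-(M + 1)) := by
  have hset : nonzeroIcc (M + 1) =
      insert ((M : ℤ) + 1) (insert (-((M : ℤ) + 1)) (nonzeroIcc M)) := by
    ext j
    simp only [nonzeroIcc, mem_erase, mem_Icc, mem_insert]
    omega
  rw [hset, sum_insert (by simp [nonzeroIcc]; omega), sum_insert (by simp [nonzeroIcc])]
  abel

noncomputable def periodicTerm (n : ℕ) (z : ℂ) (k : ℤ) : ℂ :=
  exp (2 * π * I * k * z) / (k : ℂ) ^ n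

theorem two_pi_I_pow_mul_regularizedCoeff (M : ℕ) (z : ℂ) (n : ℕ) :
    (2 * π * I) ^ n * regularizedCoeff M z n =
      (2 * π * I) ^ n * Polynomial.aeval z (Polynomial.bernoulli n) / n ! +
        ∑ k ∈ nonzeroIcc M, periodicTerm n z k := by
  rw [regularizedCoeff, mul_add, bernoulliCoeff, mul_div_assoc, mul_sum]
  congr 1
  refine sum_congr rfl fun k _ ↦ ?_
  have h2πI : (2 * π * I : ℂ) ≠ 0 := by simp [Real.pi_ne_zero, I_ne_zero]
  rw [periodicTerm, expPeriod, mul_inv, mul_pow (2 * π * I)⁻¹, inv_pow, inv_pow, mul_left_comm,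
    ← mul_assoc (_ ^ n), mul_inv_cancel₀ (pow_ne_zero n h2πI), one_mul, div_eq_mul_inv]

theorem add_sum_periodicTerm_eq (m n : ℕ) (z : ℂ) :
    (2 * π * I) ^ n * Polynomial.aeval z (Polynomial.bernoulli n) / n ! +
        ∑ k ∈ nonzeroIcc m, periodicTerm n z k =
      (2 * π * I) ^ n * regularizedCoeff (m + 1) z n - periodicTerm n z (m + 1) -
        periodicTerm n z (-(m + 1)) := by
  rw [two_pi_I_pow_mul_regularizedCoeff, sum_nonzeroIcc_succ]
  ring

theorem norm_periodicTerm_le (n : ℕ) (z : ℂ) {k : ℤ} {M : ℕ} (hk : |k| = M) :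
    ‖periodicTerm n z k‖ ≤ Real.exp (2 * π * M * ‖z‖) / (M : ℝ) ^ n := by
  have hk' : |(k : ℝ)| = M := by exact_mod_cast hk
  rw [periodicTerm, norm_div, norm_pow, norm_intCast, norm_exp, hk']
  gcongr
  calc (2 * π * I * k * z).re ≤ ‖expPeriod k * z‖ := re_le_norm _
    _ = 2 * π * M * ‖z‖ := by rw [norm_mul, norm_expPeriod, hk']

theorem exists_norm_two_pi_I_pow_mul_regularizedCoeff_le (m : ℕ) {K : Set ℂ}
    (hK : IsCompact K) : ∃ C > 0, ∀ z ∈ K, ∀ n,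
      ‖(2 * π * I) ^ n * regularizedCoeff (m + 1) z n‖ ≤ C / (m + 1 : ℝ) ^ n := by
  obtain ⟨C, hC0, hC⟩ := exists_norm_regularizedCoeff_le (m + 1) hK
  refine ⟨C, hC0, fun z hz n ↦ ?_⟩
  have h2πI : ‖(2 * π * I : ℂ)‖ = 2 * π := by simp [abs_of_pos Real.pi_pos]
  have hratio : 2 * π / (π * (2 * ((m + 1 : ℕ) : ℝ) + 1)) ≤ 1 / (m + 1) := by
    rw [div_le_div_iff₀ (by positivity) (by positivity)]
    push_cast
    nlinarith [Real.pi_pos]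
  calc ‖(2 * π * I) ^ n * regularizedCoeff (m + 1) z n‖
      = (2 * π) ^ n * ‖regularizedCoeff (m + 1) z n‖ := by rw [norm_mul, norm_pow, h2πI]
    _ ≤ (2 * π) ^ n * (C / (π * (2 * ((m + 1 : ℕ) : ℝ) + 1)) ^ n) := by
        gcongr
        exact hC z hz n
    _ = C * (2 * π / (π * (2 * ((m + 1 : ℕ) : ℝ) + 1))) ^ n := by rw [div_pow]; ring
    _ ≤ C * (1 / (m + 1)) ^ n := by gcongr
    _ = C / (m + 1 : ℝ) ^ n := by rw [one_div_pow, mul_one_div]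

theorem bernoulli_poly_asymptotic_general (m : ℕ) (K : Set ℂ) (hK : IsCompact K) :
    ∃ C > 0, ∀ n : ℕ, 2 ≤ n → ∀ z ∈ K,
      ‖(2 * Real.pi * Complex.I) ^ n *
            Polynomial.aeval z (Polynomial.bernoulli n) / (n.factorial : ℂ)
          + ∑ k ∈ (Finset.Icc (-(m : ℤ)) (m : ℤ)).erase 0,
              Complex.exp (2 * Real.pi * Complex.I * k * z) / (k : ℂ) ^ n‖
        ≤ C * Real.exp (2 * Real.pi * (m + 1) * ‖z‖) / (m + 1 : ℝ) ^ n := by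
  obtain ⟨C, hC0, hC⟩ := exists_norm_two_pi_I_pow_mul_regularizedCoeff_le m hK
  refine ⟨C + 2, by positivity, fun n _ z hz ↦ ?_⟩
  have hE : 1 ≤ Real.exp (2 * π * (m + 1) * ‖z‖) := Real.one_le_exp (by positivity)
  have hedge (k : ℤ) (hk : |k| = (m : ℤ) + 1) :
      ‖periodicTerm n z k‖ ≤ Real.exp (2 * π * (m + 1) * ‖z‖) / (m + 1 : ℝ) ^ n := by
    simpa using norm_periodicTerm_le n z (M := m + 1) (by push_cast; exact hk)
  change ‖_ + ∑ k ∈ nonzeroIcc m, periodicTerm n z k‖ ≤ _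
  rw [add_sum_periodicTerm_eq]
  calc _ ≤ ‖(2 * π * I) ^ n * regularizedCoeff (m + 1) z n‖ +
          ‖periodicTerm n z (m + 1)‖ + ‖periodicTerm n z (-(m + 1))‖ :=
        (norm_sub_le _ _).trans (add_le_add_left (norm_sub_le _ _) _)
    _ ≤ C / (m + 1 : ℝ) ^ n + Real.exp (2 * π * (m + 1) * ‖z‖) / (m + 1 : ℝ) ^ n +
          Real.exp (2 * π * (m + 1) * ‖z‖) / (m + 1 : ℝ) ^ n :=
        add_le_add (add_le_add (hC z hz n) (hedge _ (abs_of_pos (by omega))))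
          (hedge _ (by rw [abs_neg]; exact abs_of_pos (by omega)))
    _ ≤ (C + 2) * Real.exp (2 * π * (m + 1) * ‖z‖) / (m + 1 : ℝ) ^ n := by
        rw [← add_div, ← add_div]
        gcongr
        nlinarith

theorem bernoulli_poly_asymptotic (m : ℕ) (hm : 1 ≤ m) (K : Set ℂ) (hK : IsCompact K) :
    ∃ C > 0, ∀ n : ℕ, 2 ≤ n → ∀ z ∈ K,
      ‖(2 * Real.pi * Complex.I) ^ n *
            Polynomial.aeval z (Polynomial.bernoulli n) / (n.factorial : ℂ)
          + ∑ k ∈ (Finset.Icc (-(m : ℤ)) (m : ℤ)).erase 0,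
              Complex.exp (2 * Real.pi * Complex.I * k * z) / (k : ℂ) ^ n‖
        ≤ C * Real.exp (2 * Real.pi * (m + 1) * ‖z‖) / (m + 1 : ℝ) ^ n :=
  bernoulli_poly_asymptotic_general m K hK
end

section
/- Let λ ∈ ℂ with λ ≠ 1 and λ ≠ −1. Then for every integer n ≥ 0 and every x ∈ ℂ, 2^n·𝓑_n(x/2; λ²) = 𝓑_n(x;λ) + 𝓑_n(x;−λ). -/
/-!
The exponential generating function `F_λ(t) = ∑ 𝓑_n(λ) tⁿ / n!` satisfies `(λ eᵗ - 1) F_λ(t) = t`,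
which is the recurrence for `𝓑_n(λ)` read coefficientwise. Since
`λ² e^{2t} - 1 = -(λ eᵗ - 1)(-λ eᵗ - 1)`, both `F_{λ²}(2t)` and `F_λ(t) + F_{-λ}(t)` solve
`(λ² e^{2t} - 1) G = 2t`, so they agree; comparing coefficients gives
`2ᵏ 𝓑_k(λ²) = 𝓑_k(λ) + 𝓑_k(-λ)`, and the binomial sums defining the polynomials carry this over.
-/

open PowerSeries Finset

lemma ABnum_recurrence (lam : ℂ) (hlam : lam ≠ 1) (n : ℕ) :
    lam * ∑ k ∈ range (n + 1), (n.choose k : ℂ) * ABnum lam k - ABnum lam n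
      = if n = 1 then 1 else 0 := by
  cases n with
  | zero => simp [ABnum]
  | succ m =>
    have hdef : (lam - 1) * ABnum lam (m + 1) =
        (if m = 0 then 1 else 0) - lam * ∑ k ∈ range (m + 1), ((m + 1).choose k : ℂ) * ABnum lam k := by
      rw [ABnum, sum_attach (range (m + 1)) fun k => ((m + 1).choose k : ℂ) * ABnum lam k]
      field_simp [sub_ne_zero.mpr hlam]
    rw [sum_range_succ, Nat.choose_self, Nat.cast_one, one_mul]
    simp only [Nat.add_eq_right]
    linear_combination hdef

lemma coeff_exp_mul_mk_div_factorial {K : Type*} [Field K] [CharZero K] (a : ℕ → K) (n : ℕ) :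
    coeff n (exp K * mk fun k => a k / k.factorial)
      = (∑ k ∈ range (n + 1), (n.choose k : K) * a k) / n.factorial := by
  rw [mul_comm, coeff_mul, Nat.sum_antidiagonal_eq_sum_range_succ_mk, sum_div]
  refine sum_congr rfl fun k hk => ?_
  have hkn : k ≤ n := Nat.lt_succ_iff.mp (mem_range.mp hk)
  rw [coeff_mk, coeff_exp, Nat.cast_choose K hkn]
  have hfac : (n.factorial : K) ≠ 0 := Nat.cast_ne_zero.mpr n.factorial_ne_zero
  simp only [one_div, map_inv₀, map_natCast]
  field_simp

noncomputable def ABegf (lam : ℂ) : ℂ⟦X⟧ := mk fun n => ABnum lam n / n.factorial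

lemma C_mul_exp_sub_one_mul_ABegf (lam : ℂ) (hlam : lam ≠ 1) :
    (C lam * exp ℂ - 1) * ABegf lam = X := by
  ext n
  rw [sub_mul, one_mul, map_sub, mul_assoc, coeff_C_mul, ABegf, coeff_exp_mul_mk_div_factorial,
    coeff_mk, coeff_X, mul_div_assoc', div_sub_div_same, ABnum_recurrence lam hlam n]
  by_cases h : n = 1 <;> simp [h]

lemma rescale_C {R : Type*} [CommSemiring R] (a b : R) : rescale a (C b) = C b := by
  ext (_ | m) <;> simp [coeff_C]

lemma rescale_two_exp {A : Type*} [CommRing A] [Algebra ℚ A] :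
    rescale (2 : A) (exp A) = exp A ^ 2 := by
  simpa using (exp_pow_eq_rescale_exp (A := A) 2).symm

lemma rescale_two_ABegf_sq (lam : ℂ) (hlam1 : lam ≠ 1) (hlam2 : lam ≠ -1) :
    rescale 2 (ABegf (lam ^ 2)) = ABegf lam + ABegf (-lam) := by
  have hsq : lam ^ 2 ≠ 1 := by
    simpa [sq_eq_one_iff] using ⟨hlam1, hlam2⟩
  have hfactor : C (lam ^ 2) * exp ℂ ^ 2 - 1 = -((C lam * exp ℂ - 1) * (C (-lam) * exp ℂ - 1)) := by
    simp only [map_pow, map_neg]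
    ring
  have hne : C (lam ^ 2) * exp ℂ ^ 2 - 1 ≠ 0 := fun h => hsq <| by
    simpa [sub_eq_zero] using congrArg constantCoeff h
  refine mul_left_cancel₀ hne ?_
  have hrescaled := congrArg (rescale (2 : ℂ)) (C_mul_exp_sub_one_mul_ABegf (lam ^ 2) hsq)
  rw [map_mul, map_sub, map_mul, map_one, rescale_C, rescale_two_exp, rescale_X] at hrescaled
  rw [hrescaled, hfactor]
  have hpos := C_mul_exp_sub_one_mul_ABegf lam hlam1
  have hneg := C_mul_exp_sub_one_mul_ABegf (-lam) (fun h => hlam2 (neg_eq_iff_eq_neg.mp h))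
  simp only [map_neg, map_ofNat] at hpos hneg ⊢
  linear_combination (-C lam * exp ℂ - 1) * hpos + (C lam * exp ℂ - 1) * hneg

lemma two_pow_mul_ABnum_sq (lam : ℂ) (hlam1 : lam ≠ 1) (hlam2 : lam ≠ -1) (k : ℕ) :
    2 ^ k * ABnum (lam ^ 2) k = ABnum lam k + ABnum (-lam) k := by
  have h := congrArg (coeff k) (rescale_two_ABegf_sq lam hlam1 hlam2)
  simp only [coeff_rescale, map_add, ABegf, coeff_mk, ← mul_div_assoc, ← add_div] at h
  exact (div_left_inj' (Nat.cast_ne_zero.mpr k.factorial_ne_zero)).mp h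

lemma pow_mul_div_pow_sub {K : Type*} [Field K] {c : K} (hc : c ≠ 0) (x : K) {k n : ℕ}
    (hkn : k ≤ n) : c ^ n * (x / c) ^ (n - k) = c ^ k * x ^ (n - k) := by
  rw [← pow_mul_pow_sub c hkn, mul_assoc, ← mul_pow, mul_div_cancel₀ x hc]

theorem apostol_bernoulli_duplication (lam : ℂ) (hlam1 : lam ≠ 1) (hlam2 : lam ≠ -1)
    (n : ℕ) (x : ℂ) :
    2 ^ n * ABpoly (lam ^ 2) n (x / 2) = ABpoly lam n x + ABpoly (-lam) n x := by
  simp only [ABpoly, mul_sum, ← sum_add_distrib]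
  refine sum_congr rfl fun k hk => ?_
  have hkn : k ≤ n := Nat.lt_succ_iff.mp (mem_range.mp hk)
  calc 2 ^ n * ((n.choose k : ℂ) * ABnum (lam ^ 2) k * (x / 2) ^ (n - k))
      = (n.choose k : ℂ) * ABnum (lam ^ 2) k * (2 ^ n * (x / 2) ^ (n - k)) := by ring
    _ = (n.choose k : ℂ) * (2 ^ k * ABnum (lam ^ 2) k) * x ^ (n - k) := by
        rw [pow_mul_div_pow_sub two_ne_zero x hkn]; ring
    _ = _ := by rw [two_pow_mul_ABnum_sq lam hlam1 hlam2 k]; ring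
end
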